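/- arXiv:2201.02520 — 3 statements merged into one kernel-verified Lean document; each statement's English description precedes it below -/
import Mathlib

section
/- Let T be a maximal spanning out-tree of a digraph D (i.e., for every arc (x,y) of D with l_T(x) ≥ l_T(y) there is a directed path from y to x in T). Then for every nonnegative integer i, the level set L_i(T) = {v : l_T(v) = i} is an independent (stable) set in the underlying graph of D. -/
universe u
variable {V : Type u}

/-- Directed walks of a given length along a relation. -/
inductive DWalk (T : V → V → Prop) : V → V → ℕ → Prop
  | refl (v : V) : DWalk T v v 0
  | cons {u v w : V} {n : ℕ} : T u v → DWalk T v w n → DWalk T u w (n + 1)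

/-- `Anc T y x` : `y` is an ancestor of `x` in `T` (`y ≤_T x`). -/
def Anc (T : V → V → Prop) (y x : V) : Prop := Relation.ReflTransGen T y x

/-- `T` is an out-tree of the digraph `D` with vertex set `S` and root `r`. -/
def IsOutTreeOn (D T : V → V → Prop) (S : Set V) (r : V) : Prop :=
  r ∈ S ∧ (∀ x y, T x y → D x y ∧ x ∈ S ∧ y ∈ S) ∧ (∀ v, ¬ T v r) ∧
  (∀ v ∈ S, v ≠ r → ∃! u, T u v) ∧ (∀ v ∈ S, Relation.ReflTransGen T r v)

/-- `T` is a spanning out-tree of `D` rooted at `r`. -/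
def IsSpanningOutTree (D T : V → V → Prop) (r : V) : Prop :=
  IsOutTreeOn D T Set.univ r

/-- `lvl` is the level function of the out-tree `T` rooted at `r`. -/
def IsLevelFun (T : V → V → Prop) (r : V) (lvl : V → ℕ) : Prop :=
  ∀ v, DWalk T r v (lvl v)

/-- `T` is a maximal spanning out-tree of `D`: for every backward arc `(x,y)`
(`l_T(x) ≥ l_T(y)`) there is a directed path from `y` to `x` in `T`. -/
def IsMaximalSOT (D T : V → V → Prop) (r : V) (lvl : V → ℕ) : Prop :=
  IsSpanningOutTree D T r ∧ IsLevelFun T r lvl ∧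
    ∀ x y, D x y → lvl y ≤ lvl x → Anc T y x

/-- `l` is the vertex list of a directed path from `a` to `b` in `D`. -/
def IsDPath (D : V → V → Prop) (a b : V) (l : List V) : Prop :=
  l.head? = some a ∧ l.getLast? = some b ∧ l.Chain' D ∧ l.Nodup

/-- Interior vertices of a path given by its vertex list. -/
def pint (l : List V) : List V := l.tail.dropLast

/-- `D` contains a subdivision of the four-blocks cycle `C(k,1,1,1)`:
four internally disjoint directed paths `x1→y1` (length ≥ k), `x2→y1`, `x2→y2`, `x1→y2`
(lengths ≥ 1). -/
def HasSubdivCk111 (D : V → V → Prop) (k : ℕ) : Prop :=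
  ∃ (x1 x2 y1 y2 : V) (p1 p2 p3 p4 : List V),
    IsDPath D x1 y1 p1 ∧ IsDPath D x2 y1 p2 ∧ IsDPath D x2 y2 p3 ∧ IsDPath D x1 y2 p4 ∧
    k + 1 ≤ p1.length ∧ 2 ≤ p2.length ∧ 2 ≤ p3.length ∧ 2 ≤ p4.length ∧
    x1 ≠ x2 ∧ x1 ≠ y1 ∧ x1 ≠ y2 ∧ x2 ≠ y1 ∧ x2 ≠ y2 ∧ y1 ≠ y2 ∧
    (∀ v, (v = x1 ∨ v = x2 ∨ v = y1 ∨ v = y2) →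
      v ∉ pint p1 ∧ v ∉ pint p2 ∧ v ∉ pint p3 ∧ v ∉ pint p4) ∧
    (∀ v ∈ pint p1, v ∉ pint p2 ∧ v ∉ pint p3 ∧ v ∉ pint p4) ∧
    (∀ v ∈ pint p2, v ∉ pint p3 ∧ v ∉ pint p4) ∧
    (∀ v ∈ pint p3, v ∉ pint p4)

/-- Disjointness conditions making `2*m` blocks (paths `P j : x j → y j` and
`Q j : x (j+1) → y j`) into an oriented cycle with `2*m` blocks. -/
def BlockDisjoint (m : ℕ) (x y : ℕ → V) (P Q : ℕ → List V) : Prop :=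
  (∀ i < m, ∀ j < m, i ≠ j → x i ≠ x j) ∧
  (∀ i < m, ∀ j < m, i ≠ j → y i ≠ y j) ∧
  (∀ i < m, ∀ j < m, x i ≠ y j) ∧
  (∀ i < m, ∀ j < m, ∀ v, (v ∈ pint (P i) ∨ v ∈ pint (Q i)) → v ≠ x j ∧ v ≠ y j) ∧
  (∀ i < m, ∀ j < m, i ≠ j → ∀ v, v ∈ pint (P i) → v ∉ pint (P j)) ∧
  (∀ i < m, ∀ j < m, i ≠ j → ∀ v, v ∈ pint (Q i) → v ∉ pint (Q j)) ∧
  (∀ i < m, ∀ j < m, ∀ v, v ∈ pint (P i) → v ∉ pint (Q j))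

/-- The relation `R` contains an oriented cycle with exactly `2*m` blocks. -/
def HasBlockCycle (R : V → V → Prop) (m : ℕ) : Prop :=
  ∃ (x y : ℕ → V) (P Q : ℕ → List V),
    (∀ j < m, IsDPath R (x j) (y j) (P j) ∧ 2 ≤ (P j).length) ∧
    (∀ j < m, IsDPath R (x ((j + 1) % m)) (y j) (Q j) ∧ 2 ≤ (Q j).length) ∧
    BlockDisjoint m x y P Q

/-- Arcs of `D_i^1` : arcs of `D` inside the residue class `i mod k` of levels
which are forward for the tree order. -/
def Di1 (D T : V → V → Prop) (lvl : V → ℕ) (k i : ℕ) : V → V → Prop :=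
  fun a b => D a b ∧ lvl a % k = i ∧ lvl b % k = i ∧ Anc T a b

/-- Arcs of `D_i^2` : backward for the tree order. -/
def Di2 (D T : V → V → Prop) (lvl : V → ℕ) (k i : ℕ) : V → V → Prop :=
  fun a b => D a b ∧ lvl a % k = i ∧ lvl b % k = i ∧ Anc T b a

/-- Arcs of `D_i^3` : between tree-incomparable vertices. -/
def Di3 (D T : V → V → Prop) (lvl : V → ℕ) (k i : ℕ) : V → V → Prop :=
  fun a b => D a b ∧ lvl a % k = i ∧ lvl b % k = i ∧ ¬ Anc T a b ∧ ¬ Anc T b a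

/-- `D` contains a mixed cycle with respect to `T` (and the level function `lvl`). -/
def HasMixedCycle (D T : V → V → Prop) (lvl : V → ℕ) (k : ℕ) : Prop :=
  ∃ i < k, ∃ m, 2 ≤ m ∧ ∃ (x y : ℕ → V) (P Q : ℕ → List V) (z1 : V) (l1 l2 : List V),
    IsDPath D (x 0) (y 0) (P 0) ∧
    P 0 = l1 ++ z1 :: l2 ∧ z1 ≠ y 0 ∧
    List.Chain' T (l1 ++ [z1]) ∧ List.Chain' (Di1 D T lvl k i) (z1 :: l2) ∧
    (∀ j, 1 ≤ j → j < m → IsDPath (Di1 D T lvl k i) (x j) (y j) (P j) ∧ 2 ≤ (P j).length) ∧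
    (∀ j < m, IsDPath (Di1 D T lvl k i) (x ((j + 1) % m)) (y j) (Q j) ∧ 2 ≤ (Q j).length) ∧
    BlockDisjoint m x y P Q ∧
    (∀ j < m, Anc T (x j) (x 0) → Anc T (x 0) (x j))

/-- `D` contains a back-mixed cycle with respect to `T`. -/
def HasBackMixedCycle (D T : V → V → Prop) (lvl : V → ℕ) (k : ℕ) : Prop :=
  ∃ i < k, ∃ m, 3 ≤ m ∧ ∃ (x y : ℕ → V) (P Q : ℕ → List V) (z1 : V) (l1 l2 : List V),
    (∀ j < m, IsDPath (Di2 D T lvl k i) (y j) (x j) (P j) ∧ 2 ≤ (P j).length) ∧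
    (∀ j, j < m - 1 → IsDPath (Di2 D T lvl k i) (y j) (x ((j + 1) % m)) (Q j) ∧ 2 ≤ (Q j).length) ∧
    IsDPath D (y (m - 1)) (x 0) (Q (m - 1)) ∧
    Q (m - 1) = l1 ++ z1 :: l2 ∧ z1 ≠ y (m - 1) ∧
    List.Chain' (Di2 D T lvl k i) (l1 ++ [z1]) ∧ List.Chain' T (z1 :: l2) ∧
    BlockDisjoint m y x P Q ∧
    (∀ j < m, ∀ v, (v ∈ P j ∨ v ∈ Q j) → Anc T v z1 → Anc T z1 v)

/-- `G` contains a wheel as a subgraph: a chordless cycle together with a vertex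
adjacent to at least three vertices of the cycle. -/
def HasWheel (G : SimpleGraph V) : Prop :=
  ∃ (n : ℕ) (c : Fin (n + 3) → V) (v : V),
    Function.Injective c ∧
    (∀ i, G.Adj (c i) (c (i + 1))) ∧
    (∀ i j, G.Adj (c i) (c j) → j = i + 1 ∨ i = j + 1) ∧
    (∀ i, v ≠ c i) ∧
    (∃ i1 i2 i3 : Fin (n + 3), i1 ≠ i2 ∧ i1 ≠ i3 ∧ i2 ≠ i3 ∧
      G.Adj v (c i1) ∧ G.Adj v (c i2) ∧ G.Adj v (c i3))

lemma DWalk.append {T : V → V → Prop} {a b c : V} {n m : ℕ}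
    (h1 : DWalk T a b n) (h2 : DWalk T b c m) : DWalk T a c (n + m) := by
  induction h1 with
  | refl v => simpa using h2
  | cons hT _ ih =>
    have := DWalk.cons hT (ih h2)
    simpa [Nat.add_right_comm] using this

lemma DWalk.snoc {T : V → V → Prop} {a b : V} {n : ℕ}
    (h : DWalk T a b (n + 1)) : ∃ c, DWalk T a c n ∧ T c b := by
  induction n generalizing a with
  | zero =>
    rcases h with _ | ⟨hT, hw⟩
    rcases hw with _ | _
    exact ⟨a, DWalk.refl a, hT⟩
  | succ n ih =>
    rcases h with _ | ⟨hT, hw⟩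
    obtain ⟨c, hc, hcb⟩ := ih hw
    exact ⟨c, DWalk.cons hT hc, hcb⟩

lemma rtg_dwalk {T : V → V → Prop} {a b : V} (h : Relation.ReflTransGen T a b) :
    ∃ n, DWalk T a b n := by
  induction h with
  | refl => exact ⟨0, DWalk.refl a⟩
  | tail _ hT ih =>
    obtain ⟨n, hn⟩ := ih
    exact ⟨n + 1, hn.append (DWalk.cons hT (DWalk.refl _))⟩

lemma walk_len_unique {T : V → V → Prop} {r : V}
    (hroot : ∀ v, ¬ T v r) (huniq : ∀ v, v ≠ r → ∃! u, T u v) :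
    ∀ n m (u : V), DWalk T r u n → DWalk T r u m → n = m := by
  intro n
  induction n with
  | zero =>
    intro m u h1 h2
    rcases h1 with _ | _
    cases m with
    | zero => rfl
    | succ m =>
      obtain ⟨c, _, hc⟩ := h2.snoc
      exact absurd hc (hroot c)
  | succ n ih =>
    intro m u h1 h2
    obtain ⟨c, hwc, hcu⟩ := h1.snoc
    cases m with
    | zero =>
      rcases h2 with _ | _
      exact absurd hcu (hroot c)
    | succ m =>
      obtain ⟨c', hwc', hc'u⟩ := h2.snoc
      have hur : u ≠ r := fun h => hroot c (h ▸ hcu)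
      obtain ⟨d, _, hd⟩ := huniq u hur
      have : c = c' := (hd c hcu).trans (hd c' hc'u).symm
      subst this
      exact congrArg Nat.succ (ih m c hwc hwc')

/-- for a maximal spanning out-tree, every level set `L_i(T)` is stable. -/
theorem level_sets_stable {V : Type u} (D T : V → V → Prop) (r : V) (lvl : V → ℕ)
    (hT : IsMaximalSOT D T r lvl) :
    ∀ i : ℕ, ∀ u v : V, lvl u = i → lvl v = i → u ≠ v → ¬ D u v := by
  intro i u v hu hv huv hD
  obtain ⟨⟨_, _, hroot, huniq, _⟩, hlvl, hmax⟩ := hT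
  have huniq' : ∀ w, w ≠ r → ∃! z, T z w := fun w hw => huniq w (Set.mem_univ w) hw
  have hanc : Anc T v u := hmax u v hD (by omega)
  obtain ⟨n, hn⟩ := rtg_dwalk hanc
  have hn1 : 1 ≤ n := by
    rcases Nat.eq_zero_or_pos n with h | h
    · subst h; rcases hn with _ | _; exact absurd rfl huv
    · exact h
  have hw : DWalk T r u (lvl v + n) := (hlvl v).append hn
  have := walk_len_unique hroot huniq' (lvl u) (lvl v + n) u (hlvl u) hw
  omega
end

section
/- If a digraph D has a spanning out-tree, then D admits a maximal spanning out-tree, i.e., a spanning out-tree T such that for every arc (x,y) of D with l_T(x) ≥ l_T(y), there is a directed path from y to x in T. -/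
universe u
variable {V : Type u}

namespace MSOTAux

variable {T : V → V → Prop} {r : V}

lemma dwalk_rtg {a b : V} {n : ℕ} (h : DWalk T a b n) : Relation.ReflTransGen T a b := by
  induction h with
  | refl v => exact Relation.ReflTransGen.refl
  | cons h1 _ ih => exact Relation.ReflTransGen.head h1 ih

lemma dwalk_snoc : ∀ {a u : V} {n : ℕ}, DWalk T a u n → ∀ {b : V}, T u b → DWalk T a b (n + 1) := by
  intro a u n h
  induction h with
  | refl v => intro b hub; exact .cons hub (.refl b)
  | cons h1 _ ih => intro b hub; exact .cons h1 (ih hub)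

lemma dwalk_append : ∀ {a b : V} {n : ℕ}, DWalk T a b n →
    ∀ {c : V} {m : ℕ}, DWalk T b c m → DWalk T a c (n + m) := by
  intro a b n h
  induction h with
  | refl v => intro c m h2; simpa using h2
  | @cons a w b n h1 _ ih =>
    intro c m h2
    have h3 := DWalk.cons h1 (ih h2)
    have e : n + m + 1 = n + 1 + m := by omega
    rw [e] at h3; exact h3

lemma rtg_dwalk {a b : V} (h : Relation.ReflTransGen T a b) : ∃ n, DWalk T a b n := by
  induction h with
  | refl => exact ⟨0, .refl a⟩
  | tail _ h2 ih => obtain ⟨n, hw⟩ := ih; exact ⟨n + 1, dwalk_snoc hw h2⟩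

lemma dwalk_zero {a b : V} (h : DWalk T a b 0) : a = b := by cases h; rfl

lemma dwalk_succ {a b : V} {n : ℕ} (h : DWalk T a b (n + 1)) :
    ∃ w, T a w ∧ DWalk T w b n := by
  cases h with
  | cons h1 h2 => exact ⟨_, h1, h2⟩

lemma dwalk_last {a b : V} {n : ℕ} (h : DWalk T a b (n + 1)) :
    ∃ u, DWalk T a u n ∧ T u b := by
  induction n generalizing a with
  | zero =>
    obtain ⟨w, h1, h2⟩ := dwalk_succ h
    obtain rfl := dwalk_zero h2
    exact ⟨a, .refl a, h1⟩
  | succ k ih =>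
    obtain ⟨w, h1, h2⟩ := dwalk_succ h
    obtain ⟨u, h3, h4⟩ := ih h2
    exact ⟨u, .cons h1 h3, h4⟩

lemma level_unique (h3 : ∀ v, ¬ T v r) (h4 : ∀ v, v ≠ r → ∃! u, T u v) :
    ∀ n {v : V} {m : ℕ}, DWalk T r v n → DWalk T r v m → n = m := by
  intro n
  induction n with
  | zero =>
    intro v m h1 h2
    obtain rfl := (dwalk_zero h1).symm
    rcases m with _ | k
    · rfl
    · obtain ⟨u, _, hur⟩ := dwalk_last h2
      exact absurd hur (h3 u)
  | succ n ih =>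
    intro v m h1 h2
    rcases m with _ | k
    · obtain rfl := (dwalk_zero h2).symm
      obtain ⟨u, _, hur⟩ := dwalk_last h1
      exact absurd hur (h3 u)
    · obtain ⟨u1, w1, hu1⟩ := dwalk_last h1
      obtain ⟨u2, w2, hu2⟩ := dwalk_last h2
      have hvr : v ≠ r := by rintro rfl; exact h3 u1 hu1
      obtain ⟨u, _, huniq⟩ := h4 v hvr
      have he : u1 = u2 := (huniq u1 hu1).trans (huniq u2 hu2).symm
      subst he
      have := ih w1 w2
      omega

lemma dwalk_prefix : ∀ {a b : V} {n : ℕ}, DWalk T a b n → ∀ j, j ≤ n → ∃ w, DWalk T a w j := by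
  intro a b n h
  induction h with
  | refl v =>
    intro j hj
    obtain rfl := Nat.le_zero.mp hj
    exact ⟨v, .refl v⟩
  | @cons a c b n h1 _ ih =>
    intro j hj
    rcases j with _ | k
    · exact ⟨a, .refl a⟩
    · obtain ⟨w, hw⟩ := ih k (by omega)
      exact ⟨w, .cons h1 hw⟩

lemma level_lt_card [Fintype V] (h3 : ∀ v, ¬ T v r) (h4 : ∀ v, v ≠ r → ∃! u, T u v)
    {v : V} {n : ℕ} (h : DWalk T r v n) : n < Fintype.card V := by
  classical
  have hex : ∀ j : Fin (n + 1), ∃ w, DWalk T r w (j : ℕ) :=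
    fun j => dwalk_prefix h j (Nat.lt_succ_iff.mp j.isLt)
  choose f hf using hex
  have hinj : Function.Injective f := by
    intro j1 j2 hj
    have := level_unique h3 h4 _ (hf j1) (hj ▸ hf j2)
    exact Fin.ext this
  have h2 := Fintype.card_le_of_injective f hinj
  rw [Fintype.card_fin] at h2
  omega

lemma lvl_dwalk (h3 : ∀ v, ¬ T v r) (h4 : ∀ v, v ≠ r → ∃! u, T u v)
    {lvl : V → ℕ} (hl : IsLevelFun T r lvl) :
    ∀ {u v : V} {n : ℕ}, DWalk T u v n → lvl v = lvl u + n := by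
  intro u v n h
  induction h with
  | refl v => simp
  | @cons a c b n h1 _ ih =>
    have hw : lvl c = lvl a + 1 := level_unique h3 h4 _ (hl c) (dwalk_snoc (hl a) h1)
    omega

lemma exchange [Fintype V] {D T : V → V → Prop} {r : V} {lvl : V → ℕ}
    (hT : IsSpanningOutTree D T r) (hl : IsLevelFun T r lvl)
    {x y : V} (hxy : D x y) (hle : lvl y ≤ lvl x) (hna : ¬ Anc T y x) :
    ∃ (T' : V → V → Prop) (lvl' : V → ℕ), IsSpanningOutTree D T' r ∧ IsLevelFun T' r lvl' ∧
      ∑ v, lvl v < ∑ v, lvl' v := by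
  classical
  obtain ⟨-, hsub, h3, h4u, hreach⟩ := hT
  have h4 : ∀ v, v ≠ r → ∃! u, T u v := fun v hv => h4u v trivial hv
  have hyr : y ≠ r := by rintro rfl; exact hna (hreach x trivial)
  set T' : V → V → Prop := fun a b => (T a b ∧ b ≠ y) ∨ (a = x ∧ b = y) with hT'def
  have lvlanc : ∀ {u v : V} {n : ℕ}, DWalk T u v n → lvl v = lvl u + n :=
    fun h => lvl_dwalk h3 h4 hl h
  have lift1 : ∀ {a b : V} {n : ℕ}, DWalk T a b n → ¬ Anc T y b → DWalk T' a b n := by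
    intro a b n h
    induction h with
    | refl v => intro _; exact .refl v
    | @cons a c b n h1 h2 ih =>
      intro hnb
      have hc : c ≠ y := by rintro rfl; exact hnb (dwalk_rtg h2)
      exact .cons (Or.inl ⟨h1, hc⟩) (ih hnb)
  have lift2 : ∀ {c b : V} {n : ℕ}, DWalk T c b n → Anc T y c → DWalk T' c b n := by
    intro c b n h
    induction h with
    | refl v => intro _; exact .refl v
    | @cons c d b n h1 _ ih =>
      intro hyc
      have hd : d ≠ y := by
        rintro rfl
        obtain ⟨m, hm⟩ := rtg_dwalk hyc
        have e1 := lvlanc hm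
        have e2 := lvlanc (DWalk.cons h1 (DWalk.refl d))
        omega
      exact .cons (Or.inl ⟨h1, hd⟩) (ih (hyc.tail h1))
  have wx : DWalk T' r x (lvl x) := lift1 (hl x) hna
  have wy : DWalk T' r y (lvl x + 1) := dwalk_snoc wx (Or.inr ⟨rfl, rfl⟩)
  have hE : ∀ v, ∃ n, DWalk T' r v n := by
    intro v
    by_cases hA : Anc T y v
    · obtain ⟨m, hm⟩ := rtg_dwalk hA
      exact ⟨lvl x + 1 + m, dwalk_append wy (lift2 hm Relation.ReflTransGen.refl)⟩
    · exact ⟨lvl v, lift1 (hl v) hA⟩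
  choose lvl' hl' using hE
  have h3' : ∀ v, ¬ T' v r := by
    rintro v (⟨hv, -⟩ | ⟨-, hv⟩)
    · exact h3 v hv
    · exact hyr hv.symm
  have h4' : ∀ v, v ≠ r → ∃! u, T' u v := by
    intro v hv
    by_cases hvy : v = y
    · subst hvy
      refine ⟨x, Or.inr ⟨rfl, rfl⟩, ?_⟩
      rintro w (⟨-, hne⟩ | ⟨rfl, -⟩)
      · exact absurd rfl hne
      · rfl
    · obtain ⟨u, hu, huniq⟩ := h4 v hv
      refine ⟨u, Or.inl ⟨hu, hvy⟩, ?_⟩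
      rintro w (⟨hw, -⟩ | ⟨-, hw⟩)
      · exact huniq w hw
      · exact absurd hw hvy
  have hST' : IsSpanningOutTree D T' r := by
    refine ⟨trivial, ?_, h3', fun v _ hv => h4' v hv, fun v _ => dwalk_rtg (hl' v)⟩
    rintro a b (⟨hab, -⟩ | ⟨rfl, rfl⟩)
    · exact ⟨(hsub a b hab).1, trivial, trivial⟩
    · exact ⟨hxy, trivial, trivial⟩
  have uniq' : ∀ {n : ℕ} {v : V} {m : ℕ}, DWalk T' r v n → DWalk T' r v m → n = m :=
    fun h1 h2 => level_unique h3' h4' _ h1 h2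
  have hle' : ∀ v, lvl v ≤ lvl' v := by
    intro v
    by_cases hA : Anc T y v
    · obtain ⟨m, hm⟩ := rtg_dwalk hA
      have e1 := lvlanc hm
      have e2 : lvl' v = lvl x + 1 + m :=
        uniq' (hl' v) (dwalk_append wy (lift2 hm Relation.ReflTransGen.refl))
      omega
    · have e : lvl' v = lvl v := uniq' (hl' v) (lift1 (hl v) hA)
      omega
  have hstrict : lvl y < lvl' y := by
    have e2 : lvl' y = lvl x + 1 := uniq' (hl' y) wy
    omega
  exact ⟨T', lvl', hST', hl', Finset.sum_lt_sum (fun v _ => hle' v) ⟨y, Finset.mem_univ y, hstrict⟩⟩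

lemma sum_lvl_lt [Fintype V] {D T : V → V → Prop} {r : V} {lvl : V → ℕ}
    (hT : IsSpanningOutTree D T r) (hl : IsLevelFun T r lvl) :
    ∑ v, lvl v < Fintype.card V * Fintype.card V := by
  obtain ⟨-, -, h3, h4u, -⟩ := hT
  have h4 : ∀ v, v ≠ r → ∃! u, T u v := fun v hv => h4u v trivial hv
  have hb : ∀ v, lvl v < Fintype.card V := fun v => level_lt_card h3 h4 (hl v)
  have hcard : 0 < Fintype.card V := Fintype.card_pos_iff.mpr ⟨r⟩
  have h1 : ∑ v, lvl v ≤ ∑ _v : V, (Fintype.card V - 1) :=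
    Finset.sum_le_sum (fun v _ => by have := hb v; omega)
  have h2 : ∑ _v : V, (Fintype.card V - 1) = Fintype.card V * (Fintype.card V - 1) := by
    simp [Finset.sum_const, Finset.card_univ, mul_comm]
  have h5 : Fintype.card V * (Fintype.card V - 1) < Fintype.card V * Fintype.card V :=
    (Nat.mul_lt_mul_left hcard).mpr (by omega)
  omega

end MSOTAux

/-- a digraph with a spanning out-tree admits a maximal spanning out-tree. -/
theorem exists_maximal_spanning_out_tree {V : Type u} [Fintype V] (D : V → V → Prop)
    (h : ∃ (T : V → V → Prop) (r : V), IsSpanningOutTree D T r) :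
    ∃ (T : V → V → Prop) (r : V) (lvl : V → ℕ), IsMaximalSOT D T r lvl := by
  classical
  obtain ⟨T0, r, hT0⟩ := h
  have key : ∀ (N : ℕ) (T : V → V → Prop) (lvl : V → ℕ),
      IsSpanningOutTree D T r → IsLevelFun T r lvl →
      Fintype.card V * Fintype.card V - ∑ v, lvl v ≤ N →
      ∃ (T' : V → V → Prop) (lvl' : V → ℕ), IsMaximalSOT D T' r lvl' := by
    intro N
    induction N with
    | zero =>
      intro T lvl hT hl hN
      exact absurd (MSOTAux.sum_lvl_lt hT hl) (by omega)
    | succ N ih =>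
      intro T lvl hT hl hN
      by_cases hmax : ∀ x y, D x y → lvl y ≤ lvl x → Anc T y x
      · exact ⟨T, lvl, hT, hl, hmax⟩
      · push_neg at hmax
        obtain ⟨x, y, hxy, hle, hna⟩ := hmax
        obtain ⟨T', lvl', hT', hl', hsum⟩ := MSOTAux.exchange hT hl hxy hle hna
        exact ih T' lvl' hT' hl' (by omega)
  have hE : ∀ v, ∃ n, DWalk T0 r v n := fun v => MSOTAux.rtg_dwalk (hT0.2.2.2.2 v trivial)
  choose lvl0 hl0 using hE
  obtain ⟨T', lvl', hm⟩ := key (Fintype.card V * Fintype.card V) T0 lvl0 hT0 hl0 (Nat.sub_le _ _)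
  exact ⟨T', r, lvl', hm⟩
end

section
/- Let k ≥ 1 and let D be a digraph with a maximal spanning out-tree T. If D contains a back-mixed cycle with respect to T, then D contains a subdivision of C(k,1,1,1). -/
universe u
variable {V : Type u}

/-!
Write the cycle as `x₀ ← y₀ → x₁ ← ⋯ → x_{m-1} ← y_{m-1}`, closed by the mixed block
`y_{m-1} ⇝ z₁ ⇝ x₀`. Arcs of `D_i^2` lead to ancestors, so every vertex of a block is an ancestor
of the block's source; ancestors of a common vertex are comparable, so the minimality of `z₁`
spreads along the cycle and `z₁` is an ancestor of every vertex of it. As the tree path from `z₁`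
to `x₀` lies on the mixed block, no other sink is an ancestor of `x₀`, and by the same comparability
argument `x₀` is an ancestor of all of them.

Let `x_c` (`c ≥ 1`) be a sink of least level. Following the mixed block (or `P₀` if `c = m - 1`)
up to its deepest vertex between `x₀` and `x_c`, and then the tree down to `x_c`, gives a path
whose tree part has at least `k` arcs, since both of its ends have level `≡ i (mod k)`. This tree
part avoids the rest of the cycle, all of whose vertices have level at least that of `x_c`. The new
path closes a back-mixed cycle with fewer blocks through `x_c, …, y_{m-1}` (or through
`y₀, …, x_c`, read backwards); when only four blocks are left, they form a subdivision of
`C(k,1,1,1)` whose long path is the new one.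
-/

open Relation

namespace List.IsChain

variable {R : V → V → Prop} {l : List V} {a b v : V}

theorem reflTransGen_head (hc : l.IsChain R) (hh : l.head? = some a) (hv : v ∈ l) :
    ReflTransGen R a v :=
  hc.induction (ReflTransGen R a) l (fun _ _ hxy h => h.tail hxy)
    (fun hne => by rw [head?_eq_some_head hne, Option.some_inj] at hh; rw [hh]) v hv

theorem reflTransGen_getLast (hc : l.IsChain R) (hl : l.getLast? = some b) (hv : v ∈ l) :
    ReflTransGen R v b :=
  hc.backwards_induction (ReflTransGen R · b) l (fun _ _ hxy h => h.head hxy)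
    (fun hne => by rw [getLast?_eq_some_getLast hne, Option.some_inj] at hl; rw [hl]) v hv

theorem forall_mem_of_rel {p : V → Prop} (hc : l.IsChain R) (hR : ∀ x y, R x y → p x ∧ p y)
    (hl : 2 ≤ l.length) : ∀ v ∈ l, p v := by
  match l, hc with
  | x :: y :: l', hc =>
    exact hc.induction p _ (fun _ _ hxy _ => (hR _ _ hxy).2)
      (fun _ => (hR _ _ (isChain_cons_cons.1 hc).1).1)

end List.IsChain

theorem mem_of_mem_pint {l : List V} {v : V} (h : v ∈ pint l) : v ∈ l :=
  List.mem_of_mem_tail (List.dropLast_subset _ h)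

namespace IsDPath

variable {R : V → V → Prop} {a b c v : V} {l : List V}

theorem head_mem (h : IsDPath R a b l) : a ∈ l := List.mem_of_mem_head? h.1

theorem last_mem (h : IsDPath R a b l) : b ∈ l := List.mem_of_mem_getLast? h.2.1

theorem imp {R' : V → V → Prop} (hR : ∀ x y, R x y → R' x y) (h : IsDPath R a b l) :
    IsDPath R' a b l :=
  ⟨h.1, h.2.1, h.2.2.1.imp fun _ _ => hR _ _, h.2.2.2⟩

theorem two_le_length (h : IsDPath R a b l) (hab : a ≠ b) : 2 ≤ l.length := by
  obtain ⟨hh, hl, -, -⟩ := h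
  match l with
  | [x] => simp_all
  | _ :: _ :: _ => simp

theorem mem_pint_of_mem (h : IsDPath R a b l) (hv : v ∈ l) (ha : v ≠ a) (hb : v ≠ b) :
    v ∈ pint l := by
  obtain ⟨hh, hl, -, -⟩ := h
  match l with
  | x :: t =>
    obtain rfl : x = a := by simpa using hh
    have hvt : v ∈ t := (List.mem_cons.1 hv).resolve_left ha
    have ht : t.getLast? = some b := by
      rwa [List.getLast?_cons_of_ne_nil (List.ne_nil_of_mem hvt)] at hl
    rw [← List.dropLast_append_getLast? b ht] at hvt
    simpa [pint, hb] using hvt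

theorem head_not_mem_pint (h : IsDPath R a b l) : a ∉ pint l := by
  obtain ⟨hh, -, -, hnd⟩ := h
  match l with
  | x :: t =>
    obtain rfl : x = a := by simpa using hh
    exact fun ha => (List.nodup_cons.1 hnd).1 (List.dropLast_subset _ ha)

theorem last_not_mem_pint (h : IsDPath R a b l) : b ∉ pint l := by
  obtain ⟨-, hl, -, hnd⟩ := h
  match l with
  | x :: t =>
    intro hb
    have ht : t.getLast? = some b := by
      have : t ≠ [] := fun ht => by simp [ht, pint] at hb
      rwa [List.getLast?_cons_of_ne_nil this] at hl
    have hnd' := (List.nodup_cons.1 hnd).2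
    rw [← List.dropLast_append_getLast? b ht] at hnd'
    exact List.disjoint_of_nodup_append hnd' hb (List.mem_singleton_self b)

theorem append {t : List V} (h₁ : IsDPath R a b l) (h₂ : IsDPath R b c (b :: t))
    (hdisj : ∀ v ∈ l, v ∉ t) : IsDPath R a c (l ++ t) := by
  have hl : l.dropLast ++ [b] = l := List.dropLast_append_getLast? b h₁.2.1
  refine ⟨?_, ?_, ?_, ?_⟩
  · rw [List.head?_append_of_ne_nil _ (List.ne_nil_of_mem h₁.head_mem)]; exact h₁.1
  · cases t with
    | nil => simpa [h₁.2.1] using h₂.2.1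
    | cons => simpa using h₂.2.1
  · have := List.IsChain.append_overlap (l₁ := l.dropLast) (l₂ := [b]) (l₃ := t)
      (by rw [hl]; exact h₁.2.2.1) h₂.2.2.1 (List.cons_ne_nil b [])
    rwa [hl] at this
  · exact List.nodup_append.2 ⟨h₁.2.2.2, (List.nodup_cons.1 h₂.2.2.2).2,
      fun x hx y hy hxy => hdisj x hx (hxy ▸ hy)⟩

theorem exists_prefix (h : IsDPath R a b l) (hv : v ∈ l) :
    ∃ p, p <+: l ∧ IsDPath R a v p := by
  obtain ⟨s, t, rfl⟩ := List.append_of_mem hv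
  have hp : s ++ [v] <+: s ++ v :: t := ⟨t, by simp⟩
  refine ⟨s ++ [v], hp, ?_, by simp, h.2.2.1.prefix hp, h.2.2.2.sublist hp.sublist⟩
  cases s <;> simpa using h.1

end IsDPath

structure IsGradedForest (T : V → V → Prop) (lvl : V → ℕ) : Prop where
  level_succ : ∀ {a b}, T a b → lvl b = lvl a + 1
  parent_unique : ∀ {a a' b}, T a b → T a' b → a = a'

namespace DWalk

variable {T : V → V → Prop}

theorem snoc_s7 {a b c : V} {n : ℕ} (h : DWalk T a b n) (hbc : T b c) : DWalk T a c (n + 1) := by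
  induction h with
  | refl => exact cons hbc (refl c)
  | cons hab _ ih => exact cons hab (ih hbc)

theorem exists_last {a c : V} {n : ℕ} (h : DWalk T a c (n + 1)) :
    ∃ b, DWalk T a b n ∧ T b c := by
  induction n generalizing a with
  | zero => cases h with | cons hab h' => cases h'; exact ⟨a, refl a, hab⟩
  | succ n ih =>
    cases h with
    | cons hab h' =>
      obtain ⟨b, hb, hbc⟩ := ih h'
      exact ⟨b, cons hab hb, hbc⟩

theorem length_unique {r v : V} {n n' : ℕ} (hr : ∀ v, ¬ T v r)
    (hu : ∀ v, v ≠ r → ∃! u, T u v) (h : DWalk T r v n) (h' : DWalk T r v n') : n = n' := by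
  induction n generalizing v n' with
  | zero =>
    cases h
    cases n' with
    | zero => rfl
    | succ n' => obtain ⟨b, -, hb⟩ := h'.exists_last; exact absurd hb (hr b)
  | succ n ih =>
    obtain ⟨b, hb, hbv⟩ := h.exists_last
    cases n' with
    | zero => cases h'; exact absurd hbv (hr b)
    | succ n' =>
      obtain ⟨b', hb', hb'v⟩ := h'.exists_last
      obtain ⟨u, -, hu⟩ := hu v (fun hv => hr b (hv ▸ hbv))
      rw [ih hb ((hu b' hb'v).trans (hu b hbv).symm ▸ hb')]

end DWalk

theorem IsGradedForest.of_isSpanningOutTree {D T : V → V → Prop} {r : V} {lvl : V → ℕ}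
    (hT : IsSpanningOutTree D T r) (hlvl : IsLevelFun T r lvl) : IsGradedForest T lvl := by
  obtain ⟨-, -, hr, hu, -⟩ := hT
  have hu' : ∀ v, v ≠ r → ∃! u, T u v := fun v => hu v (Set.mem_univ v)
  refine ⟨fun {a b} hab => DWalk.length_unique hr hu' (hlvl b) ((hlvl a).snoc_s7 hab), ?_⟩
  intro a a' b hab ha'b
  obtain ⟨u, -, hu⟩ := hu' b (fun hb => hr a (hb ▸ hab))
  exact (hu a hab).trans (hu a' ha'b).symm

namespace IsGradedForest

variable {T : V → V → Prop} {lvl : V → ℕ} (hF : IsGradedForest T lvl)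
include hF

theorem lvl_le {a b : V} (h : Anc T a b) : lvl a ≤ lvl b := by
  induction h with
  | refl => exact le_rfl
  | tail _ hcd ih => rw [hF.level_succ hcd]; omega

theorem lvl_lt {a b : V} (h : Anc T a b) (hne : a ≠ b) : lvl a < lvl b := by
  rcases h.cases_tail with rfl | ⟨c, hac, hcb⟩
  · exact absurd rfl hne
  · rw [hF.level_succ hcb]; exact Nat.lt_succ_of_le (hF.lvl_le hac)

theorem anc_antisymm {a b : V} (hab : Anc T a b) (hba : Anc T b a) : a = b := by
  by_contra hne
  exact absurd (hF.lvl_le hba) (not_le.2 (hF.lvl_lt hab hne))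

theorem anc_of_anc_of_lvl_le {a b c : V} (hac : Anc T a c) (hbc : Anc T b c)
    (hle : lvl a ≤ lvl b) : Anc T a b := by
  induction hbc with
  | refl => exact hac
  | @tail d e hbd hde ih =>
    rcases hac.cases_tail with rfl | ⟨d', had', hd'e⟩
    · have := hF.lvl_le hbd; rw [hF.level_succ hde] at hle; omega
    · exact ih (hF.parent_unique hd'e hde ▸ had')

theorem anc_total {a b c : V} (hac : Anc T a c) (hbc : Anc T b c) : Anc T a b ∨ Anc T b a :=
  (le_total (lvl a) (lvl b)).imp (hF.anc_of_anc_of_lvl_le hac hbc) (hF.anc_of_anc_of_lvl_le hbc hac)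

theorem lvl_getLast {a : V} {l : List V} (hc : (a :: l).IsChain T) :
    lvl ((a :: l).getLast (List.cons_ne_nil a l)) = lvl a + l.length := by
  induction l generalizing a with
  | nil => rfl
  | cons b l ih =>
    obtain ⟨hab, hc⟩ := List.isChain_cons_cons.1 hc
    rw [List.getLast_cons_cons, ih hc, hF.level_succ hab, List.length_cons]
    omega

theorem nodup_of_isChain {l : List V} (hc : l.IsChain T) : l.Nodup := by
  have : (l.map lvl).IsChain (· < ·) :=
    (List.isChain_map lvl).2 (hc.imp fun _ _ hab => by rw [hF.level_succ hab]; omega)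
  exact List.Nodup.of_map lvl (this.pairwise.imp ne_of_lt)

theorem exists_path {a b : V} (h : Anc T a b) :
    ∃ l, IsDPath T a b (a :: l) ∧ l.length = lvl b - lvl a := by
  obtain ⟨l, hc, hl⟩ := List.exists_isChain_cons_of_relationReflTransGen h
  refine ⟨l, ⟨rfl, by rw [List.getLast?_eq_some_getLast (List.cons_ne_nil a l), hl], hc,
    hF.nodup_of_isChain hc⟩, ?_⟩
  have := hF.lvl_getLast hc
  rw [hl] at this
  omega

theorem mem_of_anc_of_anc {l : List V} {a b v : V} (hc : l.IsChain T) (hh : l.head? = some a)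
    (hl : l.getLast? = some b) (hav : Anc T a v) (hvb : Anc T v b) : v ∈ l := by
  induction l generalizing a with
  | nil => simp at hh
  | cons x t ih =>
    obtain rfl : x = a := by simpa using hh
    by_cases hva : v = x
    · exact hva ▸ List.mem_cons_self
    match t, hc with
    | [], _ =>
      obtain rfl : x = b := by simpa using hl
      exact absurd (hF.anc_antisymm hvb hav) hva
    | y :: t', hc =>
      obtain ⟨hxy, hc'⟩ := List.isChain_cons_cons.1 hc
      have hyb : Anc T y b := hc'.reflTransGen_getLast (by simpa using hl) List.mem_cons_self
      have hle : lvl y ≤ lvl v := by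
        rw [hF.level_succ hxy]; exact hF.lvl_lt hav (Ne.symm hva)
      exact List.mem_cons_of_mem _
        (ih hc' rfl (by simpa using hl) (hF.anc_of_anc_of_lvl_le hyb hvb hle))

theorem exists_path_avoiding {A : List V} {a σ : V} (haA : a ∈ A) (haσ : Anc T a σ)
    (hσA : σ ∉ A) :
    ∃ b ∈ A, Anc T a b ∧ b ≠ σ ∧
      ∃ I, IsDPath T b σ (b :: I) ∧ I.length = lvl σ - lvl b ∧ ∀ v ∈ A, v ∉ I := by
  classical
  obtain ⟨b, hb, hbmax⟩ := Finset.exists_max_image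
    {v ∈ A.toFinset | Anc T a v ∧ Anc T v σ ∧ v ≠ σ} lvl
    ⟨a, by simpa [haA, haσ] using ⟨ReflTransGen.refl, fun h => hσA (h ▸ haA)⟩⟩
  simp only [Finset.mem_filter, List.mem_toFinset] at hb hbmax
  obtain ⟨hbA, hab, hbσ, hbσ'⟩ := hb
  obtain ⟨I, hI, hIlen⟩ := hF.exists_path hbσ
  refine ⟨b, hbA, hab, hbσ', I, hI, hIlen, fun v hvA hvI => ?_⟩
  have hbv : Anc T b v := hI.2.2.1.reflTransGen_head rfl (List.mem_cons_of_mem b hvI)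
  have hvb : b ≠ v := fun h => (List.nodup_cons.1 hI.2.2.2).1 (h ▸ hvI)
  have := hbmax v ⟨hvA, hab.trans hbv,
    hI.2.2.1.reflTransGen_getLast hI.2.1 (List.mem_cons_of_mem b hvI), fun h => hσA (h ▸ hvA)⟩
  exact absurd this (not_le.2 (hF.lvl_lt hbv hvb))

end IsGradedForest

theorem Nat.add_le_of_mod_eq_of_lt {a b k : ℕ} (hmod : a % k = b % k) (hab : a < b) :
    a + k ≤ b := by
  by_contra! hlt
  have hdvd : k ∣ b - a := Nat.dvd_of_mod_eq_zero (Nat.sub_mod_eq_zero_of_mod_eq hmod.symm)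
  have := Nat.eq_zero_of_dvd_of_lt hdvd (by omega)
  omega

structure InternallyDisjoint (n : ℕ) (w : ℕ → V) (B : ℕ → List V) : Prop where
  corner_inj : ∀ s < n, ∀ s' < n, w s = w s' → s = s'
  corner_not_mem : ∀ t < n, ∀ s < n, w s ∉ pint (B t)
  pint_disjoint : ∀ t < n, ∀ t' < n, t ≠ t' → ∀ v ∈ pint (B t), v ∉ pint (B t')

namespace InternallyDisjoint

variable {n : ℕ} {w : ℕ → V} {B : ℕ → List V}

theorem corner_not_mem_of_ne {R : V → V → Prop} {s t u u' : ℕ} (hd : InternallyDisjoint n w B)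
    (hB : IsDPath R (w u) (w u') (B t)) (ht : t < n) (hs : s < n) (hu : u < n) (hu' : u' < n)
    (hsu : s ≠ u) (hsu' : s ≠ u') : w s ∉ B t := fun hmem =>
  hd.corner_not_mem t ht s hs (hB.mem_pint_of_mem hmem
    (fun he => hsu (hd.corner_inj s hs u hu he)) (fun he => hsu' (hd.corner_inj s hs u' hu' he)))

theorem reindex (hd : InternallyDisjoint n w B) {n' t₀ : ℕ} {e f : ℕ → ℕ} {N : List V}
    (he : ∀ s < n', e s < n) (he_inj : ∀ s < n', ∀ s' < n', e s = e s' → s = s')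
    (hf : ∀ t < n', t ≠ t₀ → f t < n)
    (hf_inj : ∀ t < n', ∀ t' < n', t ≠ t₀ → t' ≠ t₀ → f t = f t' → t = t')
    (hN : ∀ v ∈ pint N, (∀ s < n', v ≠ w (e s)) ∧
      ∀ t < n', t ≠ t₀ → v ∉ pint (B (f t))) :
    InternallyDisjoint n' (fun s => w (e s)) (fun t => if t = t₀ then N else B (f t)) := by
  refine ⟨fun s hs s' hs' h => he_inj s hs s' hs' (hd.corner_inj _ (he s hs) _ (he s' hs') h),
    fun t ht s hs hmem => ?_, fun t ht t' ht' hne v hv hv' => ?_⟩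
  · split_ifs at hmem with htt₀
    · exact (hN _ hmem).1 s hs rfl
    · exact hd.corner_not_mem _ (hf t ht htt₀) _ (he s hs) hmem
  · split_ifs at hv hv' with h h' h'
    · exact hne (h.trans h'.symm)
    · exact (hN v hv).2 t' ht' h' hv'
    · exact (hN v hv').2 t ht h hv
    · exact hd.pint_disjoint _ (hf t ht h) _ (hf t' ht' h')
        (fun hff => hne (hf_inj t ht t' ht' h h' hff)) v hv hv'

end InternallyDisjoint

section MixedPath

variable {D T : V → V → Prop} {lvl : V → ℕ} {k i : ℕ}

theorem anc_of_reflTransGen_di2 {u v : V} (h : ReflTransGen (Di2 D T lvl k i) u v) :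
    Anc T v u := by
  induction h with
  | refl => exact ReflTransGen.refl
  | tail _ hcd ih => exact hcd.2.2.2.trans ih

def IsMixedPath (D T : V → V → Prop) (lvl : V → ℕ) (k i : ℕ) (s a z : V) (A : List V) :
    Prop :=
  IsDPath D s a A ∧
    ∃ l₁ l₂, A = l₁ ++ z :: l₂ ∧ (l₁ ++ [z]).IsChain (Di2 D T lvl k i) ∧ (z :: l₂).IsChain T

namespace IsMixedPath

variable {s a z σ : V} {A : List V}

theorem turn_anc (h : IsMixedPath D T lvl k i s a z A) {v : V} (hv : v ∈ A) : Anc T z v := by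
  obtain ⟨-, l₁, l₂, rfl, hdesc, htree⟩ := h
  rcases List.mem_append.1 hv with hv | hv
  · exact anc_of_reflTransGen_di2 (hdesc.reflTransGen_getLast (by simp) (by simp [hv]))
  · exact htree.reflTransGen_head rfl hv

theorem turn_mem (h : IsMixedPath D T lvl k i s a z A) : z ∈ A := by
  obtain ⟨-, l₁, l₂, rfl, -⟩ := h
  simp

theorem of_desc (h : IsDPath (Di2 D T lvl k i) s a A) : IsMixedPath D T lvl k i s a a A :=
  ⟨h.imp fun _ _ h => h.1, A.dropLast, [], by simp [List.dropLast_append_getLast? a h.2.1],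
    by rw [List.dropLast_append_getLast? a h.2.1]; exact h.2.2.1, List.isChain_singleton a⟩

theorem append_tree (h : IsMixedPath D T lvl k i s a z A) {I : List V}
    (hI : IsDPath T a σ (a :: I)) (hTD : ∀ a b, T a b → D a b) (hdisj : ∀ v ∈ A, v ∉ I) :
    IsMixedPath D T lvl k i s σ z (A ++ I) := by
  obtain ⟨hA, l₁, l₂, rfl, hdesc, htree⟩ := h
  refine ⟨hA.append (hI.imp hTD) hdisj, l₁, l₂ ++ I, by simp, hdesc, ?_⟩
  have hlast : (z :: l₂).getLast? = some a := by
    rw [← hA.2.1, List.getLast?_append_of_ne_nil _ (List.cons_ne_nil z l₂)]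
  rw [← List.cons_append]
  refine htree.append (List.isChain_cons.1 hI.2.2.1).2 fun x hx y hy => ?_
  obtain rfl : x = a := by simpa [hlast] using hx.symm
  exact (List.isChain_cons.1 hI.2.2.1).1 y hy

/-- Follow `A` up to a deepest vertex `b` between `a` and `σ`, then go down the tree to `σ`.
As `b` and `σ` both lie in `V_i`, the tree part has at least `k` arcs. -/
theorem exists_detour (h : IsMixedPath D T lvl k i s a z A) (hzs : z ≠ s)
    (hF : IsGradedForest T lvl) (hTD : ∀ a b, T a b → D a b)
    (ha : lvl a % k = i) (hσ : lvl σ % k = i) (haσ : Anc T a σ) (hσA : σ ∉ A) :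
    ∃ N z', IsMixedPath D T lvl k i s σ z' N ∧ z' ≠ σ ∧ k + 1 ≤ N.length ∧
      ∀ v ∈ N, v ∈ A ∨ Anc T v σ := by
  obtain ⟨b, hbA, hab, hbσ, I, hI, hIlen, hIA⟩ :=
    hF.exists_path_avoiding h.1.last_mem haσ hσA
  have hIσ : ∀ v ∈ b :: I, Anc T v σ := fun v hv => hI.2.2.1.reflTransGen_getLast hI.2.1 hv
  obtain ⟨A', z', hA', hA'A, hbi⟩ :
      ∃ A' z', IsMixedPath D T lvl k i s b z' A' ∧ (∀ v ∈ A', v ∈ A) ∧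
        lvl b % k = i := by
    obtain ⟨hA, l₁, l₂, hsplit, hdesc, htree⟩ := h
    rw [hsplit, ← List.singleton_append, ← List.append_assoc, List.mem_append] at hbA
    rcases hbA with hbL | hbR
    · have hLA : (l₁ ++ [z]).Sublist A := by
        rw [hsplit]; simp
      have hl₁ : l₁ ≠ [] := by rintro rfl; exact hzs (by simpa [hsplit] using hA.1)
      have hL : IsDPath (Di2 D T lvl k i) s z (l₁ ++ [z]) :=
        ⟨by simpa [hl₁, hsplit] using hA.1, by simp, hdesc, hA.2.2.2.sublist hLA⟩
      obtain ⟨p, hpre, hp⟩ := hL.exists_prefix hbL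
      exact ⟨p, b, .of_desc hp, fun v hv => hLA.subset (hpre.subset hv),
        hdesc.forall_mem_of_rel (fun _ _ h => ⟨h.2.1, h.2.2.1⟩) (hL.two_le_length hzs.symm)
          b hbL⟩
    · have hlast : (z :: l₂).getLast? = some a := by
        rw [← hA.2.1, hsplit, List.getLast?_append_of_ne_nil _ (List.cons_ne_nil z l₂)]
      obtain rfl : b = a :=
        hF.anc_antisymm (htree.reflTransGen_getLast hlast (List.mem_cons_of_mem z hbR)) hab
      exact ⟨A, z, ⟨hA, l₁, l₂, hsplit, hdesc, htree⟩, fun _ => id, ha⟩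
  have hgap :=
    Nat.add_le_of_mod_eq_of_lt (hbi.trans hσ.symm) (hF.lvl_lt (hIσ b List.mem_cons_self) hbσ)
  refine ⟨A' ++ I, z', hA'.append_tree hI hTD fun v hv => hIA v (hA'A v hv),
    fun h => hσA (h ▸ hA'A z' hA'.turn_mem), ?_, fun v hv => ?_⟩
  · have := List.length_pos_of_mem hA'.turn_mem
    rw [List.length_append]
    omega
  · exact (List.mem_append.1 hv).imp (hA'A v)
      (fun hv => hIσ v (List.mem_cons_of_mem b hv))

end IsMixedPath

end MixedPath

/-- The oriented cycle `w 0 ← w 1 → w 2 ← ⋯ → w (2m-2) ← w (2m-1) ⇝ w 0` with `2m` blocks: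
block `t < 2m - 1` is a `D_i^2`-path joining `w t` and `w (t + 1)`, directed from the odd-indexed
end to the even-indexed one, and block `2m - 1` is the mixed block, turning at `z`. In the notation
of `HasBackMixedCycle`, `w (2 * j) = x j` and `w (2 * j + 1) = y j`. -/
structure IsBackMixed (D T : V → V → Prop) (lvl : V → ℕ) (k i m : ℕ) (w : ℕ → V)
    (B : ℕ → List V) (z : V) : Prop where
  block : ∀ t < 2 * m - 1, IsDPath (Di2 D T lvl k i) (w (t + 1 - t % 2)) (w (t + t % 2)) (B t)
  mixed : IsMixedPath D T lvl k i (w (2 * m - 1)) (w 0) z (B (2 * m - 1))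
  turn_ne : z ≠ w (2 * m - 1)
  disjoint : InternallyDisjoint (2 * m) w B
  turn_min : ∀ t < 2 * m, ∀ v ∈ B t, Anc T v z → Anc T z v

namespace IsBackMixed

variable {D T : V → V → Prop} {lvl : V → ℕ} {k i m : ℕ} {w : ℕ → V} {B : ℕ → List V} {z : V}

section

variable (h : IsBackMixed D T lvl k i m w B z)
include h

theorem corner_mem {t : ℕ} (ht : t < 2 * m - 1) : w t ∈ B t ∧ w (t + 1) ∈ B t := by
  have hb := h.block t ht
  rcases Nat.mod_two_eq_zero_or_one t with h2 | h2 <;> simp only [h2] at hb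
  · exact ⟨hb.last_mem, hb.head_mem⟩
  · exact ⟨by simpa using hb.head_mem, hb.last_mem⟩

theorem anc_source {t : ℕ} {v : V} (ht : t < 2 * m - 1) (hv : v ∈ B t) :
    Anc T v (w (t + 1 - t % 2)) :=
  anc_of_reflTransGen_di2 ((h.block t ht).2.2.1.reflTransGen_head (h.block t ht).1 hv)

theorem sink_anc {t : ℕ} {v : V} (ht : t < 2 * m - 1) (hv : v ∈ B t) :
    Anc T (w (t + t % 2)) v :=
  anc_of_reflTransGen_di2 ((h.block t ht).2.2.1.reflTransGen_getLast (h.block t ht).2.1 hv)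

theorem lvl_mod {s : ℕ} (hs : s < 2 * m - 1) : lvl (w s) % k = i := by
  have hne : w (s + 1 - s % 2) ≠ w (s + s % 2) := fun he => by
    have := h.disjoint.corner_inj _ (by omega) _ (by omega) he
    omega
  exact (h.block s hs).2.2.1.forall_mem_of_rel (fun _ _ h => ⟨h.2.1, h.2.2.1⟩)
    ((h.block s hs).two_le_length hne) _ (h.corner_mem hs).1

variable (hF : IsGradedForest T lvl)
include hF

theorem turn_anc : ∀ t < 2 * m, ∀ v ∈ B t, Anc T z v := by
  have hmixed : ∀ v ∈ B (2 * m - 1), Anc T z v := fun v hv => h.mixed.turn_anc hv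
  -- all vertices of a block are ancestors of its source, so they are comparable with `z`
  have hspread : ∀ t < 2 * m - 1, ∀ u ∈ B t, Anc T z u → ∀ v ∈ B t, Anc T z v := by
    intro t ht u hu hzu v hv
    exact (hF.anc_total (hzu.trans (h.anc_source ht hu)) (h.anc_source ht hv)).elim id
      (h.turn_min t (by omega) v hv)
  have hblock : ∀ t < 2 * m - 1, ∀ v ∈ B t, Anc T z v := by
    intro t
    induction t with
    | zero => exact fun ht => hspread 0 ht _ (h.corner_mem ht).1 (hmixed _ h.mixed.1.last_mem)
    | succ t ih =>
      exact fun ht => hspread _ ht _ (h.corner_mem ht).1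
        (ih (by omega) _ (h.corner_mem (by omega)).2)
  intro t ht
  rcases (by omega : t < 2 * m - 1 ∨ t = 2 * m - 1) with ht' | rfl
  exacts [hblock t ht', hmixed]

theorem not_anc_zero {s : ℕ} (hs1 : 1 ≤ s) (hs : s < 2 * m - 1) : ¬ Anc T (w s) (w 0) := by
  intro hs0
  obtain ⟨hM, l₁, l₂, hsplit, -, htree⟩ := h.mixed
  have hlast : (z :: l₂).getLast? = some (w 0) := by
    rw [← hM.2.1, hsplit, List.getLast?_append_of_ne_nil _ (List.cons_ne_nil z l₂)]
  have hmem : w s ∈ B (2 * m - 1) := hsplit ▸ List.mem_append_right _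
    (hF.mem_of_anc_of_anc htree rfl hlast (h.turn_anc hF s (by omega) _ (h.corner_mem hs).1) hs0)
  exact h.disjoint.corner_not_mem_of_ne hM (by omega) (by omega) (by omega) (by omega) (by omega)
    (by omega) hmem

theorem zero_anc {s : ℕ} (hs : s < 2 * m - 1) : Anc T (w 0) (w s) := by
  induction s with
  | zero => exact ReflTransGen.refl
  | succ s ih =>
    have hs' : s < 2 * m - 1 := by omega
    have h0 := (ih hs').trans (h.anc_source hs' (h.corner_mem hs').1)
    exact (hF.anc_total h0 (h.anc_source hs' (h.corner_mem hs').2)).resolve_right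
      (h.not_anc_zero hF (by omega) hs)

variable {p : ℕ} (hp : ∀ j, 1 ≤ j → j < m → lvl (w p) ≤ lvl (w (2 * j)))
include hp

theorem lvl_le_of_mem {t : ℕ} {v : V} (ht1 : 1 ≤ t) (ht : t < 2 * m - 1) (hv : v ∈ B t) :
    lvl (w p) ≤ lvl v := by
  have := hp ((t + t % 2) / 2) (by omega) (by omega)
  rw [show 2 * ((t + t % 2) / 2) = t + t % 2 by omega] at this
  exact this.trans (hF.lvl_le (h.sink_anc ht hv))

theorem lvl_le_corner {s : ℕ} (hm : 2 ≤ m) (hs1 : 1 ≤ s) (hs : s < 2 * m) :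
    lvl (w p) ≤ lvl (w s) := by
  rcases (by omega : s < 2 * m - 1 ∨ s = 2 * m - 2 + 1) with hs' | rfl
  · exact h.lvl_le_of_mem hF hp hs1 hs' (h.corner_mem hs').1
  · exact h.lvl_le_of_mem hF hp (by omega) (by omega) (h.corner_mem (by omega)).2

theorem avoids_rest (hm : 2 ≤ m) {tA : ℕ} (htA : tA = 0 ∨ tA = 2 * m - 1) {v : V}
    (hv : v ∈ pint (B tA) ∨ v = w 0 ∨ lvl v < lvl (w p)) :
    (∀ s, 1 ≤ s → s < 2 * m → v ≠ w s) ∧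
      ∀ t, 1 ≤ t → t < 2 * m - 1 → v ∉ pint (B t) := by
  rcases hv with hv | rfl | hv
  · exact ⟨fun s _ hs he => h.disjoint.corner_not_mem tA (by omega) s hs (he ▸ hv),
      fun t _ ht => h.disjoint.pint_disjoint tA (by omega) t (by omega) (by omega) v hv⟩
  · refine ⟨fun s hs1 hs he => ?_,
      fun t _ ht => h.disjoint.corner_not_mem t (by omega) 0 (by omega)⟩
    have := h.disjoint.corner_inj 0 (by omega) s hs he
    omega
  · exact ⟨fun s hs1 hs he => absurd (h.lvl_le_corner hF hp hm hs1 hs) (he ▸ hv).not_ge,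
      fun t ht1 ht hv' => absurd (h.lvl_le_of_mem hF hp ht1 ht (mem_of_mem_pint hv')) hv.not_ge⟩

end

/-- Keep the corners `w (e s)` and the blocks `B (f t)`, and close them up into a shorter cycle by
rerouting the block `B tA`, which ends at `w 0`, to the sink `w p = w (e 0)` of least level. Every
kept vertex descends from a sink `w (2 * j)` with `j ≥ 1`, so its level is at least `lvl (w p)`;
this keeps the new tree part, made of proper ancestors of `w p`, off the kept part. -/
theorem reroute (h : IsBackMixed D T lvl k i m w B z) (hF : IsGradedForest T lvl)
    (hTD : ∀ a b, T a b → D a b) (hm : 2 ≤ m) {p m' tA : ℕ} {e f : ℕ → ℕ}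
    (hp : ∀ j, 1 ≤ j → j < m → lvl (w p) ≤ lvl (w (2 * j))) (hp' : p < 2 * m - 1)
    (hm' : 1 ≤ m') (htA : tA = 0 ∨ tA = 2 * m - 1)
    (he : ∀ s < 2 * m', 1 ≤ e s ∧ e s < 2 * m)
    (he_inj : ∀ s < 2 * m', ∀ s' < 2 * m', e s = e s' → s = s') (he0 : e 0 = p)
    (hf : ∀ t < 2 * m' - 1, 1 ≤ f t ∧ f t < 2 * m - 1)
    (hf_inj : ∀ t < 2 * m' - 1, ∀ t' < 2 * m' - 1, f t = f t' → t = t')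
    (hsrc : ∀ t < 2 * m' - 1, e (t + 1 - t % 2) = f t + 1 - f t % 2)
    (hsnk : ∀ t < 2 * m' - 1, e (t + t % 2) = f t + f t % 2)
    {zA : V} (hA : IsMixedPath D T lvl k i (w (e (2 * m' - 1))) (w 0) zA (B tA))
    (hzA : zA ≠ w (e (2 * m' - 1))) :
    ∃ N z', IsBackMixed D T lvl k i m' (fun s => w (e s))
      (fun t => if t = 2 * m' - 1 then N else B (f t)) z' ∧ k + 1 ≤ N.length := by
  have hp0 := he0 ▸ he 0 (by omega)
  have hσA : w p ∉ B tA := h.disjoint.corner_not_mem_of_ne hA.1 (by omega) (by omega)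
    (he _ (by omega)).2 (by omega)
    (fun hpe => absurd (he_inj 0 (by omega) _ (by omega) (he0.trans hpe)) (by omega)) (by omega)
  obtain ⟨N, z', hN, hz'σ, hNlen, hNmem⟩ := hA.exists_detour hzA hF hTD
    (h.lvl_mod (by omega)) (h.lvl_mod hp') (h.zero_anc hF hp') hσA
  have hz' : lvl z' < lvl (w p) := hF.lvl_lt (hN.turn_anc hN.1.last_mem) hz'σ
  refine ⟨N, z', ⟨fun t ht => ?_, ?_, fun he' => ?_,
    h.disjoint.reindex (fun s hs => (he s hs).2) he_inj
      (fun t ht htt => (hf t (by omega)).2.trans (by omega))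
      (fun t ht t' ht' htt htt' => hf_inj t (by omega) t' (by omega)) (fun v hv => ?_),
    fun t ht v hv hvz => ?_⟩, hNlen⟩
  · simp only [if_neg (show t ≠ 2 * m' - 1 by omega)]
    rw [hsrc t ht, hsnk t ht]
    exact h.block (f t) (hf t ht).2
  · rw [if_pos rfl, he0]
    exact hN
  · exact hz'.not_ge (he' ▸ h.lvl_le_corner hF hp hm (he _ (by omega)).1 (he _ (by omega)).2)
  · have hvN := mem_of_mem_pint hv
    have hv' : v ∈ pint (B tA) ∨ v = w 0 ∨ lvl v < lvl (w p) := by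
      rcases hNmem v hvN with hvA | hvσ
      · by_cases hv0 : v = w 0
        · exact Or.inr (Or.inl hv0)
        · exact Or.inl (hA.1.mem_pint_of_mem hvA
            (fun he' => hN.1.head_not_mem_pint (he' ▸ hv)) hv0)
      · exact Or.inr (Or.inr (hF.lvl_lt hvσ fun he' => hN.1.last_not_mem_pint (he' ▸ hv)))
    obtain ⟨hcorner, hblock⟩ := h.avoids_rest hF hp hm htA hv'
    exact ⟨fun s hs => hcorner _ (he s hs).1 (he s hs).2,
      fun t ht htt => hblock _ (hf t (by omega)).1 (hf t (by omega)).2⟩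
  · split_ifs at hv with htt
    · exact hN.turn_anc hv
    · exact absurd ((h.lvl_le_of_mem hF hp (hf t (by omega)).1 (hf t (by omega)).2 hv).trans
        (hF.lvl_le hvz)) hz'.not_ge

/-- Let `w p` be a sink of least level among `w 2, …, w (2m-2)`. If `p ≤ 2m - 4`, keep the part
of the cycle from `w p` to `w (2m-1)` and reroute the mixed block; if `p = 2m - 2`, keep the part
from `w 1` to `w p`, read backwards, and reroute the block `B 0`. -/
theorem reduce (h : IsBackMixed D T lvl k i m w B z) (hF : IsGradedForest T lvl)
    (hTD : ∀ a b, T a b → D a b) (hm : 3 ≤ m) :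
    ∃ m' w' B' z', 2 ≤ m' ∧ m' < m ∧ IsBackMixed D T lvl k i m' w' B' z' ∧
      k + 1 ≤ (B' (2 * m' - 1)).length := by
  obtain ⟨j, hj, hjmin⟩ := Finset.exists_min_image (Finset.Ico 1 m) (fun j => lvl (w (2 * j)))
    ⟨1, Finset.mem_Ico.2 ⟨le_rfl, by omega⟩⟩
  simp only [Finset.mem_Ico] at hj hjmin
  have hp : ∀ j', 1 ≤ j' → j' < m → lvl (w (2 * j)) ≤ lvl (w (2 * j')) :=
    fun j' h1 h2 => hjmin j' ⟨h1, h2⟩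
  by_cases hjm : j + 2 ≤ m
  · obtain ⟨N, z', h', hN⟩ := h.reroute hF hTD (by omega) (m' := m - j) (e := (2 * j + ·))
      (f := (2 * j + ·)) hp (by omega) (by omega) (Or.inr rfl)
      (fun _ _ => ⟨by omega, by omega⟩)
      (fun _ _ _ _ _ => by omega) rfl (fun _ _ => ⟨by omega, by omega⟩)
      (fun _ _ _ _ _ => by omega) (fun _ _ => by omega) (fun _ _ => by omega)
      (by convert h.mixed using 2; omega) (by convert h.turn_ne using 2; omega)
    exact ⟨m - j, _, _, z', by omega, by omega, h', by simpa using hN⟩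
  · have hB0 := h.block 0 (by omega)
    simp only [Nat.zero_mod, Nat.add_zero, Nat.zero_add, Nat.sub_zero] at hB0
    obtain ⟨N, z', h', hN⟩ := h.reroute hF hTD (by omega) (m' := m - 1) (e := (2 * m - 2 - ·))
      (f := (2 * m - 3 - ·)) (tA := 0) hp (by omega) (by omega) (Or.inl rfl)
      (fun _ _ => ⟨by omega, by omega⟩) (fun _ _ _ _ _ => by omega) (by omega)
      (fun _ _ => ⟨by omega, by omega⟩) (fun _ _ _ _ _ => by omega) (fun _ _ => by omega)
      (fun _ _ => by omega) (by convert IsMixedPath.of_desc hB0 using 2; omega)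
      (fun he => by
        have := h.disjoint.corner_inj 0 (by omega) _ (by omega) he
        omega)
    exact ⟨m - 1, _, _, z', by omega, by omega, h', by simpa using hN⟩

theorem hasSubdivCk111 (h : IsBackMixed D T lvl k i 2 w B z) (hlong : k + 1 ≤ (B 3).length) :
    HasSubdivCk111 D k := by
  have hd := h.disjoint
  have hne : ∀ s s', s < 4 ∧ s' < 4 ∧ s ≠ s' → w s ≠ w s' := fun s s' hss' he =>
    hss'.2.2 (hd.corner_inj s hss'.1 s' hss'.2.1 he)
  have hc : ∀ s t, s < 4 ∧ t < 4 → w s ∉ pint (B t) := fun s t hst =>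
    hd.corner_not_mem t hst.2 s hst.1
  have hb : ∀ t t', t < 4 ∧ t' < 4 ∧ t ≠ t' → ∀ v ∈ pint (B t), v ∉ pint (B t') :=
    fun t t' htt' => hd.pint_disjoint t htt'.1 t' htt'.2.1 htt'.2.2
  have h0 : IsDPath D (w 1) (w 0) (B 0) := (h.block 0 (by norm_num)).imp fun _ _ h => h.1
  have h1 : IsDPath D (w 1) (w 2) (B 1) := (h.block 1 (by norm_num)).imp fun _ _ h => h.1
  have h2 : IsDPath D (w 3) (w 2) (B 2) := (h.block 2 (by norm_num)).imp fun _ _ h => h.1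
  refine ⟨w 3, w 1, w 0, w 2, B 3, B 0, B 1, B 2, h.mixed.1, h0, h1, h2, hlong,
    h0.two_le_length (hne 1 0 (by decide)), h1.two_le_length (hne 1 2 (by decide)),
    h2.two_le_length (hne 3 2 (by decide)), hne 3 1 (by decide), hne 3 0 (by decide),
    hne 3 2 (by decide), hne 1 0 (by decide), hne 1 2 (by decide), hne 0 2 (by decide), ?_,
    fun v hv => ⟨hb 3 0 (by decide) v hv, hb 3 1 (by decide) v hv, hb 3 2 (by decide) v hv⟩,
    fun v hv => ⟨hb 0 1 (by decide) v hv, hb 0 2 (by decide) v hv⟩,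
    fun v hv => hb 1 2 (by decide) v hv⟩
  rintro v (rfl | rfl | rfl | rfl) <;>
    exact ⟨hc _ 3 (by decide), hc _ 0 (by decide), hc _ 1 (by decide), hc _ 2 (by decide)⟩

theorem hasSubdivCk111_of_three_le (hF : IsGradedForest T lvl) (hTD : ∀ a b, T a b → D a b)
    (h : IsBackMixed D T lvl k i m w B z) (hm : 3 ≤ m) : HasSubdivCk111 D k := by
  induction m using Nat.strong_induction_on generalizing w B z with
  | _ m ih =>
    obtain ⟨m', w', B', z', hm'2, hm'm, h', hlong⟩ := h.reduce hF hTD hm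
    rcases (by omega : m' = 2 ∨ 3 ≤ m') with rfl | hm'3
    · exact h'.hasSubdivCk111 hlong
    · exact ih m' hm'm h' hm'3

end IsBackMixed

section Interleave

variable {α : Type*} (x y : ℕ → α)

def interleave (s : ℕ) : α := if s % 2 = 0 then x (s / 2) else y (s / 2)

@[simp] theorem interleave_two_mul (j : ℕ) : interleave x y (2 * j) = x j := by
  simp [interleave]

@[simp] theorem interleave_two_mul_add_one (j : ℕ) : interleave x y (2 * j + 1) = y j := by
  simp [interleave, Nat.add_mod, Nat.add_div]

end Interleave

theorem HasBackMixedCycle.exists_isBackMixed {D T : V → V → Prop} {lvl : V → ℕ} {k : ℕ}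
    (h : HasBackMixedCycle D T lvl k) :
    ∃ i m w B z, 3 ≤ m ∧ IsBackMixed D T lvl k i m w B z := by
  obtain ⟨i, -, m, hm, x, y, P, Q, z, l₁, l₂, hP, hQ, hM, hsplit, hzy, hdesc, htree,
    ⟨hyne, hxne, hyx, hint, hPP, hQQ, hPQ⟩, hmin⟩ := h
  have hodd : 2 * m - 1 = 2 * (m - 1) + 1 := by omega
  refine ⟨i, m, interleave x y, interleave P Q, z, hm, ⟨fun t ht => ?_, ?_,
    by simpa [hodd] using hzy,
    ⟨fun s hs s' hs' he => ?_, fun t ht s hs hmem => ?_, fun t ht t' ht' hne v hv hv' => ?_⟩,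
    fun t ht v hv => ?_⟩⟩
  · obtain ⟨j, rfl | rfl⟩ := Nat.even_or_odd' t
    · rw [show 2 * j + 1 - 2 * j % 2 = 2 * j + 1 by omega, show 2 * j + 2 * j % 2 = 2 * j by omega]
      simpa using (hP j (by omega)).1
    · rw [show 2 * j + 1 + 1 - (2 * j + 1) % 2 = 2 * j + 1 by omega,
        show 2 * j + 1 + (2 * j + 1) % 2 = 2 * (j + 1) by omega]
      simpa [Nat.mod_eq_of_lt (show j + 1 < m by omega)] using (hQ j (by omega)).1
  · rw [hodd, interleave_two_mul_add_one, interleave_two_mul_add_one]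
    exact ⟨hM, l₁, l₂, hsplit, hdesc, htree⟩
  · obtain ⟨j, rfl | rfl⟩ := Nat.even_or_odd' s <;>
      obtain ⟨j', rfl | rfl⟩ := Nat.even_or_odd' s' <;>
      simp only [interleave_two_mul, interleave_two_mul_add_one] at he
    · by_contra hne; exact hxne j (by omega) j' (by omega) (by omega) he
    · exact absurd he.symm (hyx j' (by omega) j (by omega))
    · exact absurd he (hyx j (by omega) j' (by omega))
    · by_contra hne; exact hyne j (by omega) j' (by omega) (by omega) he
  · obtain ⟨j, rfl | rfl⟩ := Nat.even_or_odd' t <;>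
      obtain ⟨j', rfl | rfl⟩ := Nat.even_or_odd' s <;>
      simp only [interleave_two_mul, interleave_two_mul_add_one] at hmem
    · exact (hint j (by omega) j' (by omega) _ (Or.inl hmem)).2 rfl
    · exact (hint j (by omega) j' (by omega) _ (Or.inl hmem)).1 rfl
    · exact (hint j (by omega) j' (by omega) _ (Or.inr hmem)).2 rfl
    · exact (hint j (by omega) j' (by omega) _ (Or.inr hmem)).1 rfl
  · obtain ⟨j, rfl | rfl⟩ := Nat.even_or_odd' t <;>
      obtain ⟨j', rfl | rfl⟩ := Nat.even_or_odd' t' <;>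
      simp only [interleave_two_mul, interleave_two_mul_add_one] at hv hv'
    · exact hPP j (by omega) j' (by omega) (by omega) v hv hv'
    · exact hPQ j (by omega) j' (by omega) v hv hv'
    · exact hPQ j' (by omega) j (by omega) v hv' hv
    · exact hQQ j (by omega) j' (by omega) (by omega) v hv hv'
  · obtain ⟨j, rfl | rfl⟩ := Nat.even_or_odd' t <;>
      simp only [interleave_two_mul, interleave_two_mul_add_one] at hv
    exacts [hmin j (by omega) v (Or.inl hv), hmin j (by omega) v (Or.inr hv)]

theorem backMixed_cycle_gives_subdivision_general {V : Type u} (D T : V → V → Prop) (r : V)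
    (lvl : V → ℕ) (k : ℕ) (hT : IsMaximalSOT D T r lvl)
    (h : HasBackMixedCycle D T lvl k) : HasSubdivCk111 D k := by
  obtain ⟨i, m, w, B, z, hm, hbm⟩ := h.exists_isBackMixed
  exact hbm.hasSubdivCk111_of_three_le (.of_isSpanningOutTree hT.1 hT.2.1)
    (fun a b hab => (hT.1.2.1 a b hab).1) hm

/-- a back-mixed cycle forces a subdivision of C(k,1,1,1). -/
theorem backMixed_cycle_gives_subdivision {V : Type u} (D T : V → V → Prop) (r : V)
    (lvl : V → ℕ) (k : ℕ) (hk : 1 ≤ k) (hT : IsMaximalSOT D T r lvl)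
    (h : HasBackMixedCycle D T lvl k) : HasSubdivCk111 D k :=
  backMixed_cycle_gives_subdivision_general D T r lvl k hT h
end
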